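/- Let N ≥ 1 and let T1 : 𝕋 → Matrix q₁ p₁ ℂ, T2 : 𝕋 → Matrix q₁ p₂ ℂ, T3 : 𝕋 → Matrix q₂ p₁ ℂ be continuous. Suppose: U_i inner continuous, U_o continuous in H∞ pointwise invertible with inverse in H∞, T2 = U_i·U_o pointwise; Y := (I − U_iU_i^∼)T1; γ > ‖Y‖∞; Y_o continuous pointwise invertible with Y_o, Y_o⁻¹ ∈ H∞ and Y_oᴴY_o = γ²·I − YᴴY pointwise; V_ci continuous co-inner in H∞ and V_co continuous pointwise invertible with V_co, V_co⁻¹ ∈ H∞ and T3·Y_o⁻¹ = V_co·V_ci pointwise; Z := U_i^∼·T1·Y_o⁻¹·(I − V_ci^∼V_ci) with ‖Z‖∞ < 1; Z_co continuous pointwise invertible with Z_co, Z_co⁻¹ ∈ H∞ and Z_co·Z_co^∼ = I − Z·Z^∼ pointwise; R := Z_co⁻¹·U_i^∼·T1·Y_o⁻¹·V_ci^∼. Let V₀, …, V_{N−1} be p₂×q₂ complex matrices, V(z) := Σ_{i=0}^{N−1} V_i·z^{−i}, and define R̂(V)(z) := z^N·R(z) − Z_co(z)⁻¹·U_o(z)·(z^N·V(z))·V_co(z).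 If D : 𝕋 → Matrix p₂ q₂ ℂ is continuous with D ∈ H∞, and X := Z_co⁻¹·U_o·D·V_co satisfies ‖R̂(V) − X‖∞ ≤ 1, then the function Q(z) := V(z) + z^{−N}·D(z) satisfies ‖T1 − T2·Q·T3‖∞ ≤ γ. -/

import Mathlib

open Matrix

/-- The spectral norm (ℓ²→ℓ² operator norm, largest singular value) of a complex matrix. -/
noncomputable def specNorm {m n : Type*} [Fintype m] [Fintype n] [DecidableEq n]
    (M : Matrix m n ℂ) : ℝ :=
  ‖LinearMap.toContinuousLinearMap (Matrix.toEuclideanLin M)‖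

/-- The `H∞` norm of a matrix-valued function on the unit circle:
`‖F‖∞ = sup_{z ∈ 𝕋} ‖F(z)‖`. -/
noncomputable def hinfNorm {m n : Type*} [Fintype m] [Fintype n] [DecidableEq n]
    (F : Circle → Matrix m n ℂ) : ℝ :=
  ⨆ z : Circle, specNorm (F z)

/-- A matrix-valued function `F` on the unit circle belongs to `H∞` if there is a
matrix-valued function `G`, continuous on the closed unit disc and analytic on the open
unit disc, with `F(z) = G(z⁻¹)` for all `z` on the circle. -/
def MemHInf {m n : Type*} (F : Circle → Matrix m n ℂ) : Prop :=
  ∃ G : ℂ → Matrix m n ℂ,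
    (∀ i j, ContinuousOn (fun w => G w i j) (Metric.closedBall (0 : ℂ) 1)) ∧
    (∀ i j, AnalyticOn ℂ (fun w => G w i j) (Metric.ball (0 : ℂ) 1)) ∧
    (∀ z : Circle, F z = G ((z : ℂ)⁻¹))

/-- The distance from `R` to `H∞` in the `‖·‖∞` norm:
`dist(R, H∞) = inf { ‖R − X‖∞ : X continuous, X ∈ H∞ }`. -/
noncomputable def distHInf {m n : Type*} [Fintype m] [Fintype n] [DecidableEq n]
    (R : Circle → Matrix m n ℂ) : ℝ :=
  sInf {c : ℝ | ∃ X : Circle → Matrix m n ℂ,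
    Continuous X ∧ MemHInf X ∧ c = hinfNorm fun z => R z - X z}

/-!
Pointwise on the circle, with `Q = V + z⁻ᴺ D` and `A = Uiᴴ T1 - Uo Q T3`, one has
`T1 - T2 Q T3 = Y + Ui A` with `Uiᴴ Y = 0`, so `‖(T1 - T2 Q T3) x‖² = ‖Y x‖² + ‖A x‖²`, while
`‖Y x‖² + ‖Yo x‖² = γ² ‖x‖²`. Hence the bound `γ` follows once `A Yo⁻¹` is a contraction.
The same argument, applied to conjugate transposes with the co-inner `Vci` and the spectral
factor `Zco` in the roles of `Ui` and `Yo`, reduces this to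
`‖Zco⁻¹ (Uiᴴ T1 Yo⁻¹ Vciᴴ - Uo Q Vco)‖ ≤ 1`, and that matrix is `z⁻ᴺ (R̂(V) - X)(z)`.
-/

open scoped Matrix.Norms.L2Operator

theorem Continuous.matrix_inv {X R n : Type*} [TopologicalSpace X] [Fintype n]
    [DecidableEq n] [Field R] [TopologicalSpace R] [IsTopologicalRing R] [ContinuousInv₀ R]
    {A : X → Matrix n n R} (hA : Continuous A) (hunit : ∀ x, IsUnit (A x)) :
    Continuous fun x => (A x)⁻¹ :=
  continuous_iff_continuousAt.2 fun x =>
    (continuousAt_matrix_inv _ <| by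
      simpa only [Ring.inverse_eq_inv'] using
        continuousAt_inv₀ ((isUnit_iff_isUnit_det _).1 (hunit x)).ne_zero).comp hA.continuousAt

section SpecNorm

variable {k l m n : Type*} [Fintype k] [Fintype l] [Fintype m] [Fintype n] [DecidableEq n]

theorem specNorm_eq_l2_opNorm (M : Matrix m n ℂ) : specNorm M = ‖M‖ := rfl

theorem specNorm_smul_of_norm_eq_one {c : ℂ} (hc : ‖c‖ = 1) (M : Matrix m n ℂ) :
    specNorm (c • M) = specNorm M := by
  rw [specNorm_eq_l2_opNorm, norm_smul, hc, one_mul, specNorm_eq_l2_opNorm]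

theorem continuous_specNorm : Continuous (specNorm : Matrix m n ℂ → ℝ) := continuous_norm

theorem norm_toEuclideanLin_le (M : Matrix m n ℂ) (x : EuclideanSpace ℂ n) :
    ‖toEuclideanLin M x‖ ≤ specNorm M * ‖x‖ :=
  (LinearMap.toContinuousLinearMap (toEuclideanLin M)).le_opNorm x

theorem specNorm_le_of_norm_sq_le {M : Matrix m n ℂ} {c : ℝ} (hc : 0 ≤ c)
    (h : ∀ x, ‖toEuclideanLin M x‖ ^ 2 ≤ c ^ 2 * ‖x‖ ^ 2) : specNorm M ≤ c :=
  ContinuousLinearMap.opNorm_le_bound _ hc fun x =>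
    (pow_le_pow_iff_left₀ (norm_nonneg _) (by positivity) two_ne_zero).1 (mul_pow c ‖x‖ 2 ▸ h x)

variable [DecidableEq k]

theorem norm_toEuclideanLin_mul_le {C : Matrix m k ℂ} (hC : specNorm C ≤ 1)
    (B : Matrix k n ℂ) (x : EuclideanSpace ℂ n) :
    ‖toEuclideanLin (C * B) x‖ ≤ ‖toEuclideanLin B x‖ :=
  calc ‖toEuclideanLin (C * B) x‖ ≤ specNorm C * ‖toEuclideanLin B x‖ := by
        rw [toLpLin_mul_same, LinearMap.comp_apply]; exact norm_toEuclideanLin_le C _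
    _ ≤ ‖toEuclideanLin B x‖ := mul_le_of_le_one_left (norm_nonneg _) hC

variable [DecidableEq l] [DecidableEq m]

theorem specNorm_conjTranspose (M : Matrix m n ℂ) : specNorm Mᴴ = specNorm M :=
  l2_opNorm_conjTranspose M

theorem norm_toEuclideanLin_sq_eq_re_inner (M : Matrix m n ℂ) (x : EuclideanSpace ℂ n) :
    ‖toEuclideanLin M x‖ ^ 2 = (inner ℂ x (toEuclideanLin (Mᴴ * M) x)).re := by
  rw [toLpLin_mul_same, LinearMap.comp_apply, toEuclideanLin_conjTranspose_eq_adjoint,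
    LinearMap.adjoint_inner_right, inner_self_eq_norm_sq_to_K]
  norm_cast

theorem norm_toEuclideanLin_sq_add_of_gram {M : Matrix m n ℂ} {P : Matrix k n ℂ}
    {Q : Matrix l n ℂ} (h : Mᴴ * M = Pᴴ * P + Qᴴ * Q) (x : EuclideanSpace ℂ n) :
    ‖toEuclideanLin M x‖ ^ 2 = ‖toEuclideanLin P x‖ ^ 2 + ‖toEuclideanLin Q x‖ ^ 2 := by
  simp only [norm_toEuclideanLin_sq_eq_re_inner, h, map_add, LinearMap.add_apply,
    inner_add_right, Complex.add_re]

theorem norm_toEuclideanLin_sq_add_of_gram_eq_smul_one {P : Matrix m n ℂ} {Q : Matrix k n ℂ}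
    {c : ℝ} (h : Pᴴ * P + Qᴴ * Q = ((c : ℂ) ^ 2) • 1) (x : EuclideanSpace ℂ n) :
    ‖toEuclideanLin P x‖ ^ 2 + ‖toEuclideanLin Q x‖ ^ 2 = c ^ 2 * ‖x‖ ^ 2 := by
  simp only [norm_toEuclideanLin_sq_eq_re_inner, ← Complex.add_re, ← inner_add_right,
    ← LinearMap.add_apply, ← map_add, h, map_smul, toLpLin_one, LinearMap.smul_apply,
    LinearMap.id_apply, inner_smul_right, inner_self_eq_norm_sq_to_K]
  simp only [Complex.coe_algebraMap, ← Complex.ofReal_pow, ← Complex.ofReal_mul, Complex.ofReal_re]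

end SpecNorm

section HInfNorm

variable {m n : Type*} [Fintype m] [Fintype n] [DecidableEq n]

theorem specNorm_le_hinfNorm {F : Circle → Matrix m n ℂ} (hF : Continuous F) (z : Circle) :
    specNorm (F z) ≤ hinfNorm F :=
  le_ciSup (isCompact_range (continuous_specNorm.comp hF)).bddAbove z

theorem hinfNorm_le {F : Circle → Matrix m n ℂ} {c : ℝ} (h : ∀ z, specNorm (F z) ≤ c) :
    hinfNorm F ≤ c :=
  ciSup_le h

theorem hinfNorm_nonneg (F : Circle → Matrix m n ℂ) : 0 ≤ hinfNorm F :=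
  Real.iSup_nonneg fun _ => norm_nonneg _

end HInfNorm

theorem conjTranspose_mul_self_add_of_orthogonal {k m n α : Type*} [Fintype k] [Fintype m]
    [DecidableEq k] [CommRing α] [StarRing α] {U : Matrix m k α} {Y : Matrix m n α}
    (hU : Uᴴ * U = 1) (hUY : Uᴴ * Y = 0) (A : Matrix k n α) :
    (Y + U * A)ᴴ * (Y + U * A) = Yᴴ * Y + Aᴴ * A :=
  calc (Y + U * A)ᴴ * (Y + U * A)
      = Yᴴ * Y + (Uᴴ * Y)ᴴ * A + Aᴴ * (Uᴴ * Y) + Aᴴ * (Uᴴ * U) * A := by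
        simp only [conjTranspose_add, conjTranspose_mul, conjTranspose_conjTranspose,
          Matrix.add_mul, Matrix.mul_add, Matrix.mul_assoc]
        abel
    _ = Yᴴ * Y + Aᴴ * A := by
        rw [hUY, hU, conjTranspose_zero, Matrix.zero_mul, Matrix.mul_zero, Matrix.mul_one]
        abel

section Factorization

variable {k m n : Type*} [Fintype k] [Fintype m] [Fintype n]
  [DecidableEq k] [DecidableEq m] [DecidableEq n]

theorem specNorm_sub_mul_le_of_inner {U : Matrix m k ℂ} {T : Matrix m n ℂ} {K : Matrix k n ℂ}
    {Yo : Matrix n n ℂ} {γ : ℝ} (hγ : 0 ≤ γ) (hU : Uᴴ * U = 1) (hYo : IsUnit Yo)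
    (hYofact : Yoᴴ * Yo = ((γ : ℂ) ^ 2) • 1 - ((1 - U * Uᴴ) * T)ᴴ * ((1 - U * Uᴴ) * T))
    (hK : specNorm ((Uᴴ * T - K) * Yo⁻¹) ≤ 1) :
    specNorm (T - U * K) ≤ γ := by
  set Y := (1 - U * Uᴴ) * T
  set A := Uᴴ * T - K
  have hsplit : T - U * K = Y + U * A := by
    simp only [Y, A, Matrix.sub_mul, Matrix.mul_sub, Matrix.one_mul, Matrix.mul_assoc]
    abel
  have hA : A = (A * Yo⁻¹) * Yo := by
    rw [Matrix.mul_assoc, nonsing_inv_mul _ ((isUnit_iff_isUnit_det _).1 hYo), Matrix.mul_one]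
  have hUY : Uᴴ * Y = 0 := by
    rw [← Matrix.mul_assoc, Matrix.mul_sub, Matrix.mul_one, ← Matrix.mul_assoc, hU,
      Matrix.one_mul, sub_self, Matrix.zero_mul]
  have hγ2 : Yᴴ * Y + Yoᴴ * Yo = ((γ : ℂ) ^ 2) • 1 := by rw [hYofact]; abel
  refine specNorm_le_of_norm_sq_le hγ fun x => ?_
  rw [hsplit,
    norm_toEuclideanLin_sq_add_of_gram (conjTranspose_mul_self_add_of_orthogonal hU hUY A),
    ← norm_toEuclideanLin_sq_add_of_gram_eq_smul_one hγ2]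
  gcongr
  rw [hA]
  exact norm_toEuclideanLin_mul_le hK _ x

theorem specNorm_sub_mul_le_one_of_coInner {V : Matrix k n ℂ} {K : Matrix m n ℂ}
    {L : Matrix m k ℂ} {Zco : Matrix m m ℂ} (hV : V * Vᴴ = 1) (hZco : IsUnit Zco)
    (hZcofact : Zco * Zcoᴴ = 1 - K * (1 - Vᴴ * V) * (K * (1 - Vᴴ * V))ᴴ)
    (hL : specNorm (Zco⁻¹ * (K * Vᴴ - L)) ≤ 1) :
    specNorm (K - L * V) ≤ 1 := by
  rw [← specNorm_conjTranspose, conjTranspose_sub, conjTranspose_mul]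
  refine specNorm_sub_mul_le_of_inner zero_le_one (U := Vᴴ) (Yo := Zcoᴴ) ?_ ?_ ?_ ?_
  · rwa [conjTranspose_conjTranspose]
  · exact (isUnit_conjTranspose _).2 hZco
  · simpa [conjTranspose_mul, conjTranspose_sub] using hZcofact
  · have h : (Vᴴᴴ * Kᴴ - Lᴴ) * Zcoᴴ⁻¹ = (Zco⁻¹ * (K * Vᴴ - L))ᴴ := by
      simp only [conjTranspose_mul, conjTranspose_sub, conjTranspose_conjTranspose,
        conjTranspose_nonsing_inv]
    rwa [h, specNorm_conjTranspose]

end Factorization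

theorem distributed_hinf_general_suboptimal_general (N : ℕ) (q1 q2 p1 p2 : ℕ)
    (T1 : Circle → Matrix (Fin q1) (Fin p1) ℂ) (hT1 : Continuous T1)
    (T2 : Circle → Matrix (Fin q1) (Fin p2) ℂ)
    (T3 : Circle → Matrix (Fin q2) (Fin p1) ℂ)
    (Ui : Circle → Matrix (Fin q1) (Fin p2) ℂ) (hUic : Continuous Ui)
    (hUiInner : ∀ z, (Ui z)ᴴ * Ui z = 1)
    (Uo : Circle → Matrix (Fin p2) (Fin p2) ℂ) (hUoc : Continuous Uo)
    (hT2fact : ∀ z, T2 z = Ui z * Uo z)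
    (Y : Circle → Matrix (Fin q1) (Fin p1) ℂ)
    (hY : Y = fun z => (1 - Ui z * (Ui z)ᴴ) * T1 z)
    (γ : ℝ) (hγ : hinfNorm Y < γ)
    (Yo : Circle → Matrix (Fin p1) (Fin p1) ℂ) (hYoc : Continuous Yo)
    (hYoUnit : ∀ z, IsUnit (Yo z))
    (hYofact : ∀ z, (Yo z)ᴴ * Yo z
      = ((γ : ℂ) ^ 2) • (1 : Matrix (Fin p1) (Fin p1) ℂ) - (Y z)ᴴ * Y z)
    (Vci : Circle → Matrix (Fin q2) (Fin p1) ℂ) (hVcic : Continuous Vci)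
    (hVciCoInner : ∀ z, Vci z * (Vci z)ᴴ = 1)
    (Vco : Circle → Matrix (Fin q2) (Fin q2) ℂ) (hVcoc : Continuous Vco)
    (hT3fact : ∀ z, T3 z * (Yo z)⁻¹ = Vco z * Vci z)
    (Z : Circle → Matrix (Fin p2) (Fin p1) ℂ)
    (hZ : Z = fun z => (Ui z)ᴴ * T1 z * (Yo z)⁻¹ * (1 - (Vci z)ᴴ * Vci z))
    (Zco : Circle → Matrix (Fin p2) (Fin p2) ℂ) (hZcoc : Continuous Zco)
    (hZcoUnit : ∀ z, IsUnit (Zco z))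
    (hZcofact : ∀ z, Zco z * (Zco z)ᴴ
      = (1 : Matrix (Fin p2) (Fin p2) ℂ) - Z z * (Z z)ᴴ)
    (R : Circle → Matrix (Fin p2) (Fin q2) ℂ)
    (hR : R = fun z => (Zco z)⁻¹ * (Ui z)ᴴ * T1 z * (Yo z)⁻¹ * (Vci z)ᴴ)
    (V : Fin N → Matrix (Fin p2) (Fin q2) ℂ)
    (Vf : Circle → Matrix (Fin p2) (Fin q2) ℂ)
    (hVf : Vf = fun z : Circle => ∑ i : Fin N, ((z : ℂ)⁻¹) ^ (i : ℕ) • V i)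
    (Rhat : Circle → Matrix (Fin p2) (Fin q2) ℂ)
    (hRhat : Rhat = fun z : Circle =>
      ((z : ℂ) ^ N) • R z - (Zco z)⁻¹ * Uo z * (((z : ℂ) ^ N) • Vf z) * Vco z)
    (D : Circle → Matrix (Fin p2) (Fin q2) ℂ) (hDc : Continuous D)
    (X : Circle → Matrix (Fin p2) (Fin q2) ℂ)
    (hX : X = fun z => (Zco z)⁻¹ * Uo z * D z * Vco z)
    (hRX : hinfNorm (fun z => Rhat z - X z) ≤ 1) :
    hinfNorm (fun z : Circle =>
        T1 z - T2 z * (Vf z + ((z : ℂ)⁻¹ ^ N) • D z) * T3 z) ≤ γ := by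
  have hγ0 : 0 ≤ γ := (hinfNorm_nonneg Y).trans hγ.le
  have hcont : Continuous fun z => Rhat z - X z := by
    have hYoInv := hYoc.matrix_inv hYoUnit
    have hZcoInv := hZcoc.matrix_inv hZcoUnit
    subst hR hVf hRhat hX
    fun_prop (disch := exact fun z => Circle.coe_ne_zero z)
  refine hinfNorm_le fun z => ?_
  set Q := Vf z + ((z : ℂ)⁻¹ ^ N) • D z
  rw [hT2fact, Matrix.mul_assoc, Matrix.mul_assoc, ← Matrix.mul_assoc (Uo z)]
  refine specNorm_sub_mul_le_of_inner hγ0 (hUiInner z) (hYoUnit z) (by rw [hYofact z, hY]) ?_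
  have hB : ((Ui z)ᴴ * T1 z - Uo z * Q * T3 z) * (Yo z)⁻¹
      = (Ui z)ᴴ * T1 z * (Yo z)⁻¹ - (Uo z * Q * Vco z) * Vci z := by
    rw [Matrix.sub_mul, Matrix.mul_assoc (Uo z * Q), hT3fact z, Matrix.mul_assoc _ (Vco z)]
  rw [hB]
  refine specNorm_sub_mul_le_one_of_coInner (hVciCoInner z) (hZcoUnit z)
    (by simpa only [hZ] using hZcofact z) ?_
  have hzN : (z : ℂ) ^ N * (z : ℂ)⁻¹ ^ N = 1 := by
    rw [← mul_pow, mul_inv_cancel₀ (Circle.coe_ne_zero z), one_pow]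
  have hW : Rhat z - X z = ((z : ℂ) ^ N) •
      ((Zco z)⁻¹ * ((Ui z)ᴴ * T1 z * (Yo z)⁻¹ * (Vci z)ᴴ - Uo z * Q * Vco z)) := by
    simp only [hRhat, hX, hR, Q, Matrix.mul_sub, Matrix.mul_add, Matrix.add_mul,
      Matrix.smul_mul, Matrix.mul_smul, smul_sub, smul_add, smul_smul, hzN, one_smul,
      Matrix.mul_assoc]
    abel
  calc _ = specNorm (Rhat z - X z) := by
        rw [hW, specNorm_smul_of_norm_eq_one (by rw [norm_pow, Circle.norm_coe, one_pow])]
    _ ≤ hinfNorm fun z => Rhat z - X z := specNorm_le_hinfNorm hcont z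
    _ ≤ 1 := hRX

/-- Distributed H∞ control subject to delays, general `T3` case (Theorem 4, part 2):
with `V(z) = Σ_{i<N} V_i z^{−i}` a FIR filter and
`R̂(V)(z) = z^N R(z) − Z_co(z)⁻¹ U_o(z)(z^N V(z)) V_co(z)`, if `‖R̂(V) − X‖∞ ≤ 1`
with `X = Z_co⁻¹ U_o D V_co`, `D ∈ H∞`, then `Q(z) = V(z) + z^{−N} D(z)` satisfies
`‖T1 − T2 Q T3‖∞ ≤ γ`. -/
theorem distributed_hinf_general_suboptimal (N : ℕ) (hN : 1 ≤ N) (q1 q2 p1 p2 : ℕ)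
    (T1 : Circle → Matrix (Fin q1) (Fin p1) ℂ) (hT1 : Continuous T1)
    (T2 : Circle → Matrix (Fin q1) (Fin p2) ℂ) (hT2 : Continuous T2)
    (T3 : Circle → Matrix (Fin q2) (Fin p1) ℂ) (hT3 : Continuous T3)
    (Ui : Circle → Matrix (Fin q1) (Fin p2) ℂ) (hUic : Continuous Ui)
    (hUiInner : ∀ z, (Ui z)ᴴ * Ui z = 1)
    (Uo : Circle → Matrix (Fin p2) (Fin p2) ℂ) (hUoc : Continuous Uo)
    (hUoH : MemHInf Uo) (hUoUnit : ∀ z, IsUnit (Uo z))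
    (hUoInvH : MemHInf fun z => (Uo z)⁻¹)
    (hT2fact : ∀ z, T2 z = Ui z * Uo z)
    (Y : Circle → Matrix (Fin q1) (Fin p1) ℂ)
    (hY : Y = fun z => (1 - Ui z * (Ui z)ᴴ) * T1 z)
    (γ : ℝ) (hγ : hinfNorm Y < γ)
    (Yo : Circle → Matrix (Fin p1) (Fin p1) ℂ) (hYoc : Continuous Yo)
    (hYoUnit : ∀ z, IsUnit (Yo z)) (hYoH : MemHInf Yo)
    (hYoInvH : MemHInf fun z => (Yo z)⁻¹)
    (hYofact : ∀ z, (Yo z)ᴴ * Yo z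
      = ((γ : ℂ) ^ 2) • (1 : Matrix (Fin p1) (Fin p1) ℂ) - (Y z)ᴴ * Y z)
    (Vci : Circle → Matrix (Fin q2) (Fin p1) ℂ) (hVcic : Continuous Vci)
    (hVciH : MemHInf Vci) (hVciCoInner : ∀ z, Vci z * (Vci z)ᴴ = 1)
    (Vco : Circle → Matrix (Fin q2) (Fin q2) ℂ) (hVcoc : Continuous Vco)
    (hVcoH : MemHInf Vco) (hVcoUnit : ∀ z, IsUnit (Vco z))
    (hVcoInvH : MemHInf fun z => (Vco z)⁻¹)
    (hT3fact : ∀ z, T3 z * (Yo z)⁻¹ = Vco z * Vci z)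
    (Z : Circle → Matrix (Fin p2) (Fin p1) ℂ)
    (hZ : Z = fun z => (Ui z)ᴴ * T1 z * (Yo z)⁻¹ * (1 - (Vci z)ᴴ * Vci z))
    (hZnorm : hinfNorm Z < 1)
    (Zco : Circle → Matrix (Fin p2) (Fin p2) ℂ) (hZcoc : Continuous Zco)
    (hZcoUnit : ∀ z, IsUnit (Zco z)) (hZcoH : MemHInf Zco)
    (hZcoInvH : MemHInf fun z => (Zco z)⁻¹)
    (hZcofact : ∀ z, Zco z * (Zco z)ᴴ
      = (1 : Matrix (Fin p2) (Fin p2) ℂ) - Z z * (Z z)ᴴ)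
    (R : Circle → Matrix (Fin p2) (Fin q2) ℂ)
    (hR : R = fun z => (Zco z)⁻¹ * (Ui z)ᴴ * T1 z * (Yo z)⁻¹ * (Vci z)ᴴ)
    (V : Fin N → Matrix (Fin p2) (Fin q2) ℂ)
    (Vf : Circle → Matrix (Fin p2) (Fin q2) ℂ)
    (hVf : Vf = fun z : Circle => ∑ i : Fin N, ((z : ℂ)⁻¹) ^ (i : ℕ) • V i)
    (Rhat : Circle → Matrix (Fin p2) (Fin q2) ℂ)
    (hRhat : Rhat = fun z : Circle =>
      ((z : ℂ) ^ N) • R z - (Zco z)⁻¹ * Uo z * (((z : ℂ) ^ N) • Vf z) * Vco z)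
    (D : Circle → Matrix (Fin p2) (Fin q2) ℂ) (hDc : Continuous D) (hDH : MemHInf D)
    (X : Circle → Matrix (Fin p2) (Fin q2) ℂ)
    (hX : X = fun z => (Zco z)⁻¹ * Uo z * D z * Vco z)
    (hRX : hinfNorm (fun z => Rhat z - X z) ≤ 1) :
    hinfNorm (fun z : Circle =>
        T1 z - T2 z * (Vf z + ((z : ℂ)⁻¹ ^ N) • D z) * T3 z) ≤ γ :=
  distributed_hinf_general_suboptimal_general N q1 q2 p1 p2 T1 hT1 T2 T3 Ui hUic hUiInner Uo hUoc
    hT2fact Y hY γ hγ Yo hYoc hYoUnit hYofact Vci hVcic hVciCoInner Vco hVcoc hT3fact Z hZ Zco hZcoc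
    hZcoUnit hZcofact R hR V Vf hVf Rhat hRhat D hDc X hX hRX
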